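/- Fix a real number M > 0. For every ε > 0 there exists L₀ such that for all integers L ≥ L₀, limsup_{t→∞} Σ_{q=L+1}^{⌊2t − M t^{1/3} − 1⌋} (2t)²/(q²(2t−q)²) ≤ ε; that is, lim_{L→∞} limsup_{t→∞} of this sum equals 0. -/

import Mathlib

/-!
Writing `2t = q + (2t - q)`, each term is `(1/q + 1/(2t - q))² ≤ 2/q² + 2/(2t - q)²`, and
`1/x² ≤ 1/(x - 1) - 1/x` for `x > 1` makes both halves telescope. Since `2t - q ≥ M t^{1/3} + 1`
on the range of summation, the sum is at most `2/L + 2/(M t^{1/3})`, whose limit as `t → ∞`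
is `2/L`.
-/

open Filter Finset

lemma inv_sq_le_inv_sub_one_sub_inv {x : ℝ} (hx : 1 < x) :
    (x ^ 2)⁻¹ ≤ (x - 1)⁻¹ - x⁻¹ := by
  have hx1 : 0 < x - 1 := by linarith
  rw [inv_sub_inv hx1.ne' (by positivity), sub_sub_cancel, one_div, sq]
  exact inv_anti₀ (by positivity) (by nlinarith)

lemma add_sq_div_sq_mul_sq_le (a b : ℝ) :
    (a + b) ^ 2 / (a ^ 2 * b ^ 2) ≤ 2 * ((a ^ 2)⁻¹ + (b ^ 2)⁻¹) := by
  rcases eq_or_ne a 0 with rfl | ha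
  · rw [zero_pow two_ne_zero, zero_mul, div_zero]
    positivity
  rcases eq_or_ne b 0 with rfl | hb
  · rw [zero_pow two_ne_zero, mul_zero, div_zero]
    positivity
  have h : (a + b) ^ 2 / (a ^ 2 * b ^ 2) = (a⁻¹ + b⁻¹) ^ 2 := by
    field_simp
    ring
  rw [h, ← inv_pow, ← inv_pow]
  nlinarith [sq_nonneg (a⁻¹ - b⁻¹)]

lemma Int.sum_Icc_sub' {α : Type*} [AddCommGroup α] (g : ℤ → α) {m n : ℤ} (hmn : m ≤ n + 1) :
    ∑ q ∈ Icc m n, (g (q - 1) - g q) = g (m - 1) - g n := by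
  obtain ⟨k, rfl⟩ : ∃ k : ℕ, n = m - 1 + k := ⟨(n - m + 1).toNat, by omega⟩
  induction k with
  | zero => simp
  | succ k ih =>
    rw [Nat.cast_succ, ← add_assoc, ← insert_Icc_right_eq_Icc_add_one (by omega),
      sum_insert (by simp), ih (by omega), add_sub_cancel_right]
    abel

lemma sum_Icc_inv_sq_le {m n : ℤ} (hm : 1 < m) :
    ∑ q ∈ Icc m n, ((q : ℝ) ^ 2)⁻¹ ≤ ((m : ℝ) - 1)⁻¹ := by
  rcases lt_or_ge (n + 1) m with hnm | hmn
  · rw [Icc_eq_empty_of_lt (by omega), sum_empty]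
    have : (1 : ℝ) < m := by exact_mod_cast hm
    exact inv_nonneg.2 (by linarith)
  calc ∑ q ∈ Icc m n, ((q : ℝ) ^ 2)⁻¹
      ≤ ∑ q ∈ Icc m n, (((q - 1 : ℤ) : ℝ)⁻¹ - (q : ℝ)⁻¹) := by
        refine sum_le_sum fun q hq => ?_
        have : (1 : ℝ) < q := by exact_mod_cast hm.trans_le (mem_Icc.1 hq).1
        simpa using inv_sq_le_inv_sub_one_sub_inv this
    _ = ((m : ℝ) - 1)⁻¹ - (n : ℝ)⁻¹ := by
        rw [Int.sum_Icc_sub' (fun q : ℤ => (q : ℝ)⁻¹) hmn, Int.cast_sub, Int.cast_one]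
    _ ≤ ((m : ℝ) - 1)⁻¹ := sub_le_self _ (inv_nonneg.2 (by exact_mod_cast (show 0 ≤ n by omega)))

lemma sum_Icc_inv_sub_sq_le {x : ℝ} {m n : ℤ} (hn : 1 < x - n) :
    ∑ q ∈ Icc m n, ((x - q) ^ 2)⁻¹ ≤ (x - n - 1)⁻¹ := by
  rcases lt_or_ge (n + 1) m with hnm | hmn
  · rw [Icc_eq_empty_of_lt (by omega), sum_empty]
    exact inv_nonneg.2 (by linarith)
  calc ∑ q ∈ Icc m n, ((x - q) ^ 2)⁻¹
      ≤ ∑ q ∈ Icc m n, (-(x - ((q - 1 : ℤ) : ℝ) - 1)⁻¹ - -(x - q - 1)⁻¹) := by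
        refine sum_le_sum fun q hq => ?_
        have : (q : ℝ) ≤ n := by exact_mod_cast (mem_Icc.1 hq).2
        rw [Int.cast_sub, Int.cast_one, sub_sub x, sub_add_cancel, neg_sub_neg]
        exact inv_sq_le_inv_sub_one_sub_inv (by linarith)
    _ = -(x - ((m - 1 : ℤ) : ℝ) - 1)⁻¹ + (x - n - 1)⁻¹ := by
        rw [Int.sum_Icc_sub' (fun q : ℤ => -(x - (q : ℝ) - 1)⁻¹) hmn]
        ring
    _ ≤ (x - n - 1)⁻¹ := by
        have : ((m - 1 : ℤ) : ℝ) ≤ n := by exact_mod_cast (show m - 1 ≤ n by omega)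
        have : 0 ≤ (x - ((m - 1 : ℤ) : ℝ) - 1)⁻¹ := inv_nonneg.2 (by linarith)
        linarith

lemma sum_Icc_sq_div_sq_mul_sq_le {x c : ℝ} {L N : ℤ} (hL : 1 ≤ L) (hc : 0 < c)
    (hN : N ≤ x - c - 1) :
    ∑ q ∈ Icc (L + 1) N, x ^ 2 / ((q : ℝ) ^ 2 * (x - q) ^ 2) ≤ 2 * ((L : ℝ)⁻¹ + c⁻¹) :=
  calc ∑ q ∈ Icc (L + 1) N, x ^ 2 / ((q : ℝ) ^ 2 * (x - q) ^ 2)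
      ≤ ∑ q ∈ Icc (L + 1) N, 2 * (((q : ℝ) ^ 2)⁻¹ + ((x - q) ^ 2)⁻¹) :=
        sum_le_sum fun q _ => by simpa using add_sq_div_sq_mul_sq_le (q : ℝ) (x - q)
    _ = 2 * (∑ q ∈ Icc (L + 1) N, ((q : ℝ) ^ 2)⁻¹ + ∑ q ∈ Icc (L + 1) N, ((x - q) ^ 2)⁻¹) := by
        rw [← mul_sum, sum_add_distrib]
    _ ≤ 2 * ((L : ℝ)⁻¹ + c⁻¹) := by
        gcongr
        · simpa using sum_Icc_inv_sq_le (m := L + 1) (n := N) (by omega)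
        · exact (sum_Icc_inv_sub_sq_le (by linarith)).trans (inv_anti₀ hc (by linarith))

lemma limsup_sum_Icc_sq_div_sq_mul_sq_le {c : ℝ → ℝ} (hc : Tendsto c atTop atTop) {L : ℕ}
    (hL : 1 ≤ L) :
    limsup (fun t : ℝ => ∑ q ∈ Icc ((L : ℤ) + 1) ⌊2 * t - c t - 1⌋,
      (2 * t) ^ 2 / ((q : ℝ) ^ 2 * (2 * t - q) ^ 2)) atTop ≤ 2 / (L : ℝ) := by
  have hbound : Tendsto (fun t => 2 * ((L : ℝ)⁻¹ + (c t)⁻¹)) atTop (nhds (2 * ((L : ℝ)⁻¹ + 0))) :=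
    (hc.inv_tendsto_atTop.const_add _).const_mul _
  calc _ ≤ limsup (fun t => 2 * ((L : ℝ)⁻¹ + (c t)⁻¹)) atTop := by
        refine limsup_le_limsup ?_ ?_ hbound.isBoundedUnder_le
        · filter_upwards [hc.eventually_gt_atTop 0] with t ht
          have := sum_Icc_sq_div_sq_mul_sq_le (x := 2 * t) (L := L) (by exact_mod_cast hL) ht
            (Int.floor_le _)
          rwa [Int.cast_natCast] at this
        · exact isCoboundedUnder_le_of_le atTop fun t => sum_nonneg fun q _ => by positivity
    _ = 2 / L := by rw [hbound.limsup_eq, add_zero, div_eq_mul_inv]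

theorem sum_q_square_vanishes (M : ℝ) (hM : 0 < M) :
    ∀ ε : ℝ, 0 < ε → ∃ L₀ : ℕ, ∀ L : ℕ, L₀ ≤ L → 1 ≤ L →
      Filter.limsup (fun t : ℝ =>
          ∑ q ∈ Finset.Icc ((L : ℤ) + 1) ⌊2 * t - M * t ^ ((1 : ℝ) / 3) - 1⌋,
            (2 * t) ^ 2 / ((q : ℝ) ^ 2 * (2 * t - (q : ℝ)) ^ 2))
        atTop ≤ ε := by
  intro ε hε
  obtain ⟨L₀, hL₀⟩ := exists_nat_ge (2 / ε)
  refine ⟨L₀, fun L hL₀L hL => ?_⟩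
  have hc : Tendsto (fun t : ℝ => M * t ^ ((1 : ℝ) / 3)) atTop atTop :=
    (tendsto_rpow_atTop (by norm_num)).const_mul_atTop hM
  refine (limsup_sum_Icc_sq_div_sq_mul_sq_le hc hL).trans ?_
  rw [div_le_iff₀ hε] at hL₀
  rw [div_le_iff₀ (by positivity), mul_comm]
  exact hL₀.trans (by gcongr)
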